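/- Let d ≥ 1. There exists a constant κ > 0, depending only on d, with the following property: for every c ∈ ℤ^d with c ≠ 0, every real Λ ≥ 3, and all a, b, e ∈ ℤ^d such that (a,b) ∈ D_{Λ+3}^+(c) and (a,e) ∉ D_Λ^+(c), one has |a − e| ≥ κ Λ^{−2} |a|/|c| and |b − e| ≥ κ Λ^{−2} |a|/|c|. -/

import Mathlib

/-- The lattice point `a ∈ ℤ^d` viewed as a vector in Euclidean space `ℝ^d`. -/
noncomputable def latt {d : ℕ} (a : Fin d → ℤ) : EuclideanSpace ℝ (Fin d) :=
  WithLp.toLp 2 (fun i => (a i : ℝ))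

/-- The Lipschitz domain `D_Λ^+(c)`: the pair `(a, b)` belongs to it iff there are
`a', b' ∈ ℤ^d` and a real `t ≥ 0` with `a = a' + tc`, `b = b' + tc`,
`|a| ≥ Λ(|a'| + |c|)|c|`, `|b| ≥ Λ(|b'| + |c|)|c|`, and
`|a|/|c| ≥ 2Λ²`, `|b|/|c| ≥ 2Λ²`. -/
def LipDom {d : ℕ} (Λ : ℝ) (c a b : Fin d → ℤ) : Prop :=
  ∃ (a' b' : Fin d → ℤ) (t : ℝ), 0 ≤ t ∧
    latt a = latt a' + t • latt c ∧
    latt b = latt b' + t • latt c ∧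
    Λ * (‖latt a'‖ + ‖latt c‖) * ‖latt c‖ ≤ ‖latt a‖ ∧
    Λ * (‖latt b'‖ + ‖latt c‖) * ‖latt c‖ ≤ ‖latt b‖ ∧
    2 * Λ ^ 2 ≤ ‖latt a‖ / ‖latt c‖ ∧
    2 * Λ ^ 2 ≤ ‖latt b‖ / ‖latt c‖

/-! If `(a, b) ∈ D_{Λ+3}^+(c)` through `a = a' + tc`, `b = b' + tc`, a lattice point `e` within
`Λ⁻² |x| / (2|c|)` of `x ∈ {a, b}` is `e = (e - x + x') + tc`, and the margin between `Λ + 3`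
and `Λ` absorbs the perturbation, so `(a, e) ∈ D_Λ^+(c)` with the same `t`. The offsets `a'`, `b'`
are small compared with `a`, `b`, hence `|a| ≤ 2|b|`, and `κ = 1/4` serves both distances. -/

def LipDomCond {E : Type*} [Norm E] (Λ : ℝ) (v x x' : E) : Prop :=
  Λ * (‖x'‖ + ‖v‖) * ‖v‖ ≤ ‖x‖ ∧ 2 * Λ ^ 2 ≤ ‖x‖ / ‖v‖

namespace LipDomCond

variable {E : Type*} [SeminormedAddCommGroup E] {Λ μ : ℝ} {v x x' y y' e : E}

theorem mono (h0 : 0 ≤ Λ) (hΛμ : Λ ≤ μ) (h : LipDomCond μ v x x') : LipDomCond Λ v x x' :=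
  ⟨le_trans (by gcongr) h.1, le_trans (by gcongr) h.2⟩

theorem mul_norm_le (hv : 1 ≤ ‖v‖) (hμ : 0 ≤ μ) (h : LipDomCond μ v x x') :
    μ * ‖x'‖ ≤ ‖x‖ :=
  calc μ * ‖x'‖ ≤ μ * (‖x'‖ + ‖v‖) * ‖v‖ := by
        nlinarith [mul_nonneg hμ (norm_nonneg x'), mul_nonneg hμ (norm_nonneg v)]
    _ ≤ ‖x‖ := h.1

/-- The offsets are at most a sixth of the points, and `x = x' - y' + y`. -/
theorem norm_le_two_mul (hv : 1 ≤ ‖v‖) (hμ : 6 ≤ μ) (hxy : x - x' = y - y')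
    (hx : LipDomCond μ v x x') (hy : LipDomCond μ v y y') : ‖x‖ ≤ 2 * ‖y‖ := by
  have hx' := hx.mul_norm_le hv (by linarith)
  have hy' := hy.mul_norm_le hv (by linarith)
  have hsum : ‖x‖ ≤ ‖x'‖ + ‖y‖ + ‖y'‖ := by
    calc ‖x‖ = ‖x' + y - y'‖ := by rw [add_sub_assoc, ← hxy]; abel_nf
      _ ≤ ‖x' + y‖ + ‖y'‖ := norm_sub_le _ _
      _ ≤ ‖x'‖ + ‖y‖ + ‖y'‖ := by gcongr; exact norm_add_le _ _
  nlinarith [norm_nonneg x', norm_nonneg y']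

/-- Keeping the shift along `v`, the offset of `e` is within `|x - e|` of `x'` and
`|e| ≥ |x| - |x - e|`; for `|x - e|` this small the gap between `Λ + 3` and `Λ` absorbs both
errors. -/
theorem of_near (hΛ : 3 ≤ Λ) (hv : 1 ≤ ‖v‖) (hx : LipDomCond (Λ + 3) v x x')
    (hδ : ‖x - e‖ < 1 / 2 * Λ⁻¹ ^ 2 * (‖x‖ / ‖v‖)) : LipDomCond Λ v e (e - x + x') := by
  set C := ‖v‖
  set X := ‖x‖
  set δ := ‖x - e‖
  have hC : 0 < C := by linarith
  have hδC : 2 * Λ ^ 2 * C * δ ≤ X := by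
    rw [show 1 / 2 * Λ⁻¹ ^ 2 * (X / C) = X / (2 * Λ ^ 2 * C) by field_simp,
      lt_div_iff₀ (by positivity)] at hδ
    linarith
  have hδ0 : 0 ≤ δ := norm_nonneg _
  have hδ1 : 2 * Λ ^ 2 * δ ≤ X := by
    nlinarith [mul_le_mul_of_nonneg_left hv (by positivity : 0 ≤ 2 * Λ ^ 2 * δ)]
  have he : X - δ ≤ ‖e‖ := by linarith [norm_sub_norm_le x e]
  constructor
  · have hoff : ‖e - x + x'‖ ≤ ‖x'‖ + δ :=
      calc ‖e - x + x'‖ = ‖x' - (x - e)‖ := by abel_nf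
        _ ≤ ‖x'‖ + δ := norm_sub_le _ _
    set P := (‖x'‖ + C) * C
    have hP : Λ * P ≤ Λ / (Λ + 3) * X := by
      rw [div_mul_eq_mul_div, le_div_iff₀ (by positivity)]
      nlinarith [mul_le_mul_of_nonneg_left (mul_assoc (Λ + 3) _ C ▸ hx.1) (by positivity : 0 ≤ Λ)]
    have hs : Λ * C * δ + δ ≤ 3 / (Λ + 3) * X := by
      have hΛCδ : 0 ≤ Λ * C * δ := by positivity
      rw [div_mul_eq_mul_div, le_div_iff₀ (by positivity)]
      nlinarith [mul_le_mul_of_nonneg_right hΛ hΛCδ, mul_le_mul_of_nonneg_right hΛ hδ0]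
    calc Λ * (‖e - x + x'‖ + C) * C ≤ Λ * (‖x'‖ + δ + C) * C := by gcongr
      _ = Λ * P + Λ * C * δ := by ring
      _ ≤ Λ / (Λ + 3) * X + 3 / (Λ + 3) * X - δ := by linarith
      _ = X - δ := by field_simp
      _ ≤ ‖e‖ := he
  · have hX : 2 * (Λ + 3) ^ 2 * C ≤ X := (le_div_iff₀ hC).mp hx.2
    have hpoly : 2 * Λ ^ 2 * (2 * Λ ^ 2) ≤ (2 * Λ ^ 2 - 1) * (2 * (Λ + 3) ^ 2) := by nlinarith
    rw [le_div_iff₀ hC]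
    refine le_of_mul_le_mul_right (?_ : _ * (2 * Λ ^ 2) ≤ _ * (2 * Λ ^ 2)) (by positivity)
    calc 2 * Λ ^ 2 * C * (2 * Λ ^ 2) ≤ (2 * Λ ^ 2 - 1) * (2 * (Λ + 3) ^ 2 * C) := by
          nlinarith [mul_le_mul_of_nonneg_right hpoly hC.le]
      _ ≤ (2 * Λ ^ 2 - 1) * X := by gcongr; nlinarith
      _ ≤ (X - δ) * (2 * Λ ^ 2) := by nlinarith
      _ ≤ ‖e‖ * (2 * Λ ^ 2) := by gcongr

end LipDomCond

theorem latt_sub {d : ℕ} (a b : Fin d → ℤ) : latt (a - b) = latt a - latt b := by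
  ext i
  simp [latt]

theorem latt_add {d : ℕ} (a b : Fin d → ℤ) : latt (a + b) = latt a + latt b := by
  ext i
  simp [latt]

theorem one_le_norm_latt {d : ℕ} {c : Fin d → ℤ} (hc : c ≠ 0) : 1 ≤ ‖latt c‖ := by
  obtain ⟨i, hi⟩ := Function.ne_iff.mp hc
  calc (1 : ℝ) ≤ |(c i : ℝ)| := by exact_mod_cast Int.one_le_abs hi
    _ = ‖latt c i‖ := by simp [latt]
    _ ≤ ‖latt c‖ := PiLp.norm_apply_le _ _

theorem lipDom_iff {d : ℕ} {Λ : ℝ} {c a b : Fin d → ℤ} :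
    LipDom Λ c a b ↔ ∃ (a' b' : Fin d → ℤ) (t : ℝ), 0 ≤ t ∧
      latt a = latt a' + t • latt c ∧ latt b = latt b' + t • latt c ∧
      LipDomCond Λ (latt c) (latt a) (latt a') ∧ LipDomCond Λ (latt c) (latt b) (latt b') := by
  unfold LipDom LipDomCond
  constructor
  · rintro ⟨a', b', t, ht, ha, hb, hA, hB, hA2, hB2⟩
    exact ⟨a', b', t, ht, ha, hb, ⟨hA, hA2⟩, hB, hB2⟩
  · rintro ⟨a', b', t, ht, ha, hb, ⟨hA, hA2⟩, hB, hB2⟩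
    exact ⟨a', b', t, ht, ha, hb, hA, hB, hA2, hB2⟩

theorem stmt_7_general (d : ℕ) :
    ∃ κ : ℝ, 0 < κ ∧ ∀ c : Fin d → ℤ, c ≠ 0 → ∀ Λ : ℝ, 3 ≤ Λ →
      ∀ a b e : Fin d → ℤ, LipDom (Λ + 3) c a b → ¬ LipDom Λ c a e →
        κ * Λ⁻¹ ^ 2 * (‖latt a‖ / ‖latt c‖) ≤ ‖latt (a - e)‖ ∧
        κ * Λ⁻¹ ^ 2 * (‖latt a‖ / ‖latt c‖) ≤ ‖latt (b - e)‖ := by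
  refine ⟨1 / 4, by norm_num, fun c hc Λ hΛ a b e hab hae => ?_⟩
  have hv := one_le_norm_latt hc
  obtain ⟨a', b', t, ht, ha, hb, hA, hB⟩ := lipDom_iff.mp hab
  have hAB : ‖latt a‖ ≤ 2 * ‖latt b‖ :=
    hA.norm_le_two_mul hv (by linarith) (by rw [ha, hb]; abel) hB
  have hA' : LipDomCond Λ (latt c) (latt a) (latt a') := hA.mono (by linarith) (by linarith)
  -- a lattice point `e` close to `x ∈ {a, b}` would put `(a, e)` in `D_Λ^+(c)`
  have near {x x' : Fin d → ℤ} (hx : latt x = latt x' + t • latt c)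
      (hX : LipDomCond (Λ + 3) (latt c) (latt x) (latt x'))
      (hδ : ‖latt (x - e)‖ < 1 / 2 * Λ⁻¹ ^ 2 * (‖latt x‖ / ‖latt c‖)) : False := by
    rw [latt_sub] at hδ
    refine hae (lipDom_iff.mpr ⟨a', e - x + x', t, ht, ha, ?_, hA', ?_⟩)
    · rw [latt_add, latt_sub, hx]; abel
    · simpa only [latt_add, latt_sub] using hX.of_near hΛ hv hδ
  constructor <;> by_contra! h
  · exact near ha hA (h.trans_le (by gcongr; norm_num))
  · refine near hb hB (h.trans_le ?_)
    calc _ ≤ 1 / 4 * Λ⁻¹ ^ 2 * (2 * ‖latt b‖ / ‖latt c‖) := by gcongr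
      _ = _ := by ring

/-- Corollary 2.2(iv): there is `κ > 0`, depending only on `d`, such that whenever
`(a,b) ∈ D_{Λ+3}^+(c)` and `(a,e) ∉ D_Λ^+(c)` (with `Λ ≥ 3`, `c ≠ 0`),
both `|a − e|` and `|b − e|` are at least `κ Λ⁻² |a|/|c|`. -/
theorem stmt_7 (d : ℕ) (hd : 1 ≤ d) :
    ∃ κ : ℝ, 0 < κ ∧ ∀ c : Fin d → ℤ, c ≠ 0 → ∀ Λ : ℝ, 3 ≤ Λ →
      ∀ a b e : Fin d → ℤ, LipDom (Λ + 3) c a b → ¬ LipDom Λ c a e →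
        κ * Λ⁻¹ ^ 2 * (‖latt a‖ / ‖latt c‖) ≤ ‖latt (a - e)‖ ∧
        κ * Λ⁻¹ ^ 2 * (‖latt a‖ / ‖latt c‖) ≤ ‖latt (b - e)‖ :=
  stmt_7_general d
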